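/- Define a*_k = (-1)^k (E_k(1/2) + (3^k - 2)/2^k). Then for every n ≥ 0, Σ_{k=0}^n C(n,k) (x - 1/2)^{n-k} a*_k = (-1)^n E_n(-x+1) - 2(x-1)^n + (x-2)^n as polynomials in x. -/

import Mathlib

open Finset

/-- Bernoulli polynomials evaluated at a real number. -/
noncomputable def bernoulliPoly (n : ℕ) (x : ℝ) : ℝ :=
  ((Polynomial.bernoulli n).map (algebraMap ℚ ℝ)).eval x

/-- Euler polynomials `E_n(x)` defined via `2 e^{xt}/(e^t+1) = ∑ E_n(x) t^n/n!`. -/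
noncomputable def eulerPoly (n : ℕ) (x : ℝ) : ℝ :=
  (n.factorial : ℝ) * PowerSeries.coeff n
    (2 * PowerSeries.mk (fun k => x ^ k / (k.factorial : ℝ)) * (PowerSeries.exp ℝ + 1)⁻¹)

/-!
Since `2e^{(x+y)t}/(e^t+1)` is the generating function at `x` times `e^{yt}`, the Euler
polynomials form an Appell sequence, `E_n(x + y) = ∑ C(n,k) E_k(x) y^{n-k}`; and since
`e^{(1-x)t}/(e^t+1) = e^{-xt}/(e^{-t}+1)`, they satisfy `E_n(1 - x) = (-1)^n E_n(x)`.
By the latter, `(-1)^k E_k(1/2) = E_k(1/2)`, and `(-1)^k (3^k - 2)/2^k = (-3/2)^k - 2(-1/2)^k`,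
so the sum splits into the Appell expansion of `E_n(x)` around `1/2` and the binomial
expansions of `(x - 2)^n` and `(x - 1)^n`; on the right, `(-1)^n E_n(1 - x) = E_n(x)`.
-/

open PowerSeries

theorem PowerSeries.constantCoeff_rescale {R : Type*} [CommSemiring R] (a : R) (φ : R⟦X⟧) :
    constantCoeff (rescale a φ) = constantCoeff φ := by
  rw [← coeff_zero_eq_constantCoeff_apply, coeff_rescale, pow_zero, one_mul,
    coeff_zero_eq_constantCoeff_apply]

theorem PowerSeries.rescale_inv {k : Type*} [Field k] (a : k) (φ : k⟦X⟧)
    (h : constantCoeff φ ≠ 0) : rescale a φ⁻¹ = (rescale a φ)⁻¹ := by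
  rw [PowerSeries.eq_inv_iff_mul_eq_one (by rwa [constantCoeff_rescale]), ← map_mul,
    PowerSeries.inv_mul_cancel _ h, map_one]

theorem PowerSeries.constantCoeff_exp_add_one_ne_zero {A : Type*} [Ring A] [Algebra ℚ A]
    [CharZero A] : constantCoeff (exp A + 1) ≠ 0 := by
  simp [constantCoeff_exp, one_add_one_eq_two]

noncomputable def eulerGenSeries (x : ℝ) : ℝ⟦X⟧ :=
  2 * rescale x (exp ℝ) * (exp ℝ + 1)⁻¹

theorem eulerPoly_eq_factorial_mul_coeff (n : ℕ) (x : ℝ) :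
    eulerPoly n x = n.factorial * coeff n (eulerGenSeries x) := by
  have hmk : mk (fun k => x ^ k / (k.factorial : ℝ)) = rescale x (exp ℝ) := by
    ext k
    simp [coeff_rescale, coeff_exp, div_eq_mul_inv]
  rw [eulerPoly, hmk, eulerGenSeries]

theorem eulerGenSeries_add (x y : ℝ) :
    eulerGenSeries (x + y) = eulerGenSeries x * rescale y (exp ℝ) := by
  rw [eulerGenSeries, eulerGenSeries, ← exp_mul_exp_eq_exp_add]
  ring

theorem eulerPoly_add (n : ℕ) (x y : ℝ) :
    eulerPoly n (x + y) = ∑ k ∈ range (n + 1), n.choose k * eulerPoly k x * y ^ (n - k) := by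
  rw [eulerPoly_eq_factorial_mul_coeff, eulerGenSeries_add, coeff_mul,
    Nat.sum_antidiagonal_eq_sum_range_succ_mk, mul_sum]
  refine sum_congr rfl fun k hk => ?_
  have hfac : (n.choose k : ℝ) * k.factorial * (n - k).factorial = n.factorial := by
    exact_mod_cast Nat.choose_mul_factorial_mul_factorial (Nat.lt_succ_iff.mp (mem_range.mp hk))
  rw [eulerPoly_eq_factorial_mul_coeff, coeff_rescale, coeff_exp, ← hfac]
  simp
  field_simp

theorem eulerGenSeries_one_sub (x : ℝ) :
    eulerGenSeries (1 - x) = rescale (-1) (eulerGenSeries x) := by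
  have hexp : rescale (-1) (exp ℝ) * exp ℝ = 1 := by
    simpa [rescale_one] using exp_mul_exp_eq_exp_add (-1 : ℝ) 1
  have hinv : (exp ℝ + 1)⁻¹ * (exp ℝ + 1) = 1 :=
    PowerSeries.inv_mul_cancel _ constantCoeff_exp_add_one_ne_zero
  have hshift : rescale (1 - x) (exp ℝ) = rescale (-x) (exp ℝ) * exp ℝ := by
    simpa [rescale_one, sub_eq_neg_add] using (exp_mul_exp_eq_exp_add (-x) 1).symm
  have hconst : constantCoeff (rescale (-1) (exp ℝ) + 1) ≠ 0 := by
    rw [← map_one (rescale (-1 : ℝ)), ← map_add, constantCoeff_rescale]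
    exact constantCoeff_exp_add_one_ne_zero
  rw [eulerGenSeries, eulerGenSeries, hshift, map_mul, map_mul, map_ofNat, rescale_rescale,
    mul_neg_one, rescale_inv _ _ constantCoeff_exp_add_one_ne_zero, map_add, map_one,
    eq_mul_inv_iff_mul_eq hconst]
  linear_combination 2 * rescale (-x) (exp ℝ) * (exp ℝ + 1)⁻¹ * hexp
    + 2 * rescale (-x) (exp ℝ) * hinv

theorem eulerPoly_one_sub (n : ℕ) (x : ℝ) :
    eulerPoly n (1 - x) = (-1) ^ n * eulerPoly n x := by
  rw [eulerPoly_eq_factorial_mul_coeff, eulerPoly_eq_factorial_mul_coeff, eulerGenSeries_one_sub,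
    coeff_rescale]
  ring

theorem stmt10 (n : ℕ) (x : ℝ) :
    ∑ k ∈ Finset.range (n + 1), (n.choose k : ℝ) * (x - 1 / 2) ^ (n - k) *
        ((-1) ^ k * (eulerPoly k (1 / 2) + (3 ^ k - 2) / 2 ^ k)) =
      (-1) ^ n * eulerPoly n (-x + 1) - 2 * (x - 1) ^ n + (x - 2) ^ n := by
  have hterm (k : ℕ) : (-1) ^ k * (eulerPoly k (1 / 2) + (3 ^ k - 2) / 2 ^ k) =
      eulerPoly k (1 / 2) + (-3 / 2) ^ k - (-1 / 2) ^ k * 2 := by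
    have hhalf := eulerPoly_one_sub k (1 / 2)
    rw [show (1 : ℝ) - 1 / 2 = 1 / 2 by norm_num] at hhalf
    rw [div_pow, div_pow, neg_pow (3 : ℝ), neg_pow (1 : ℝ), one_pow]
    linear_combination -hhalf
  have happell : ∑ k ∈ range (n + 1), (n.choose k : ℝ) * (x - 1 / 2) ^ (n - k) *
      eulerPoly k (1 / 2) = eulerPoly n x := by
    have h := eulerPoly_add n (1 / 2) (x - 1 / 2)
    rw [add_sub_cancel] at h
    rw [h]
    exact sum_congr rfl fun k _ => by ring
  have hbinom (a : ℝ) : ∑ k ∈ range (n + 1), (n.choose k : ℝ) * (x - 1 / 2) ^ (n - k) * a ^ k =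
      (a + (x - 1 / 2)) ^ n := by
    rw [add_pow]
    exact sum_congr rfl fun k _ => by ring
  have hsymm : (-1) ^ n * eulerPoly n (-x + 1) = eulerPoly n x := by
    rw [neg_add_eq_sub, eulerPoly_one_sub, ← mul_assoc, ← pow_add, Even.neg_one_pow ⟨n, rfl⟩,
      one_mul]
  simp_rw [hterm, mul_sub, mul_add, sum_sub_distrib, sum_add_distrib, ← mul_assoc, ← sum_mul,
    happell, hbinom, hsymm]
  ring
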